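/- Let C and C' be finite sets of clients with |C| = |C'| = n, let k ≤ n, let m ≤ n be a natural number with |C' \ C| ≤ m, and let f : Finset Client → Label be any function. Then for any two labels y and i, as integers, N_y(C', f) − N_i(C', f) ≥ N_y(C, f) − N_i(C, f) − 2·(C(n,k) − C(n−m,k)). -/

import Mathlib

/-!
Compare both client sets through their common part `A = C ∩ C'`, which has at least `n - m`
elements. A `k`-subset of `A` is a `k`-subset of both `C` and `C'`, and each of `C`, `C'` has at
most `C(n, k) - C(n - m, k)` further `k`-subsets. Hence passing from `C` to `C'` lowers `N_y` by
at most that amount and raises `N_i` by at most that amount.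
-/

open Finset

/-- Label count: number of `k`-element subsets `T` of `S` with `f T = j`. -/
def labelCount {Client Label : Type} [DecidableEq Client] [DecidableEq Label]
    (k : ℕ) (f : Finset Client → Label) (S : Finset Client) (j : Label) : ℕ :=
  ((S.powersetCard k).filter (fun T => f T = j)).card

section LabelCount

variable {Client Label : Type} [DecidableEq Client] [DecidableEq Label]
  (k : ℕ) (f : Finset Client → Label) {A S : Finset Client} (j : Label)

lemma labelCount_mono (h : A ⊆ S) : labelCount k f A j ≤ labelCount k f S j :=
  card_le_card (filter_subset_filter _ (powersetCard_mono h))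

lemma labelCount_sub_le_choose_sub_choose (h : A ⊆ S) :
    (labelCount k f S j : ℤ) - labelCount k f A j ≤ ((#S).choose k : ℤ) - (#A).choose k := by
  have hcover : (S.powersetCard k).filter (fun T => f T = j) ⊆
      (A.powersetCard k).filter (fun T => f T = j) ∪ (S.powersetCard k \ A.powersetCard k) := by
    intro T
    simp only [mem_filter, mem_union, mem_sdiff]
    tauto
  have hnew : #(S.powersetCard k \ A.powersetCard k) = (#S).choose k - (#A).choose k := by
    rw [card_sdiff_of_subset (powersetCard_mono h), card_powersetCard, card_powersetCard]
  have hchoose : (#A).choose k ≤ (#S).choose k := Nat.choose_le_choose k (card_le_card h)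
  have := (card_le_card hcover).trans (card_union_le _ _)
  unfold labelCount
  omega

end LabelCount

theorem labelCount_diff_bound_general
    {Client Label : Type} [DecidableEq Client] [DecidableEq Label]
    (n k : ℕ)
    (C C' : Finset Client) (hC : C.card = n) (hC' : C'.card = n)
    (m : ℕ) (hm : (C' \ C).card ≤ m)
    (f : Finset Client → Label) (y i : Label) :
    (labelCount k f C y : ℤ) - (labelCount k f C i : ℤ)
      - 2 * ((Nat.choose n k : ℤ) - (Nat.choose (n - m) k : ℤ))
    ≤ (labelCount k f C' y : ℤ) - (labelCount k f C' i : ℤ) := by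
  rw [card_sdiff] at hm
  set A := C ∩ C'
  have hAC : A ⊆ C := inter_subset_left
  have hAC' : A ⊆ C' := inter_subset_right
  have hA : n - m ≤ #A := by omega
  have hchoose : (Nat.choose (n - m) k : ℤ) ≤ (#A).choose k := by
    exact_mod_cast Nat.choose_le_choose k hA
  have hy_lost := labelCount_sub_le_choose_sub_choose k f y hAC
  have hi_gained := labelCount_sub_le_choose_sub_choose k f i hAC'
  have hy_common : (labelCount k f A y : ℤ) ≤ labelCount k f C' y := by
    exact_mod_cast labelCount_mono k f y hAC'
  have hi_common : (labelCount k f A i : ℤ) ≤ labelCount k f C i := by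
    exact_mod_cast labelCount_mono k f i hAC
  rw [hC] at hy_lost
  rw [hC'] at hi_gained
  linarith

theorem labelCount_diff_bound
    {Client Label : Type} [DecidableEq Client] [DecidableEq Label]
    (n k : ℕ) (hkn : k ≤ n)
    (C C' : Finset Client) (hC : C.card = n) (hC' : C'.card = n)
    (m : ℕ) (hmn : m ≤ n) (hm : (C' \ C).card ≤ m)
    (f : Finset Client → Label) (y i : Label) :
    (labelCount k f C y : ℤ) - (labelCount k f C i : ℤ)
      - 2 * ((Nat.choose n k : ℤ) - (Nat.choose (n - m) k : ℤ))
    ≤ (labelCount k f C' y : ℤ) - (labelCount k f C' i : ℤ) :=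
  labelCount_diff_bound_general n k C C' hC hC' m hm f y i
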